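/- Let a, b be odd integers with a ≥ 3, b ≥ 1, T the generalized Collatz map, and Ω a cycle of T with K odd and L even elements. Then 1 < 2^(K+L)/a^K, i.e., a^K < 2^(K+L). -/

import Mathlib

/-!
Since `Ω` is finite and `T '' Ω = Ω`, `T` permutes `Ω`, so `∏_{x ∈ Ω} T x = ∏_{x ∈ Ω} x`.
Multiplying by `2 ^ (K + L)` and using `2 T x = a x + b` for odd `x` and `2 T x = x` for even `x`
gives `2 ^ (K + L) ∏ x = ∏_{odd} (a x + b) ∏_{even} x`, which exceeds `a ^ K ∏ x` because `b > 0`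
and there is at least one odd element.
-/

open Finset

theorem Finset.prod_comp_eq_prod_of_image_eq {α M : Type*} [DecidableEq α] [CommMonoid M]
    {s : Finset α} {f : α → α} (hf : s.image f = s) (g : α → M) :
    ∏ x ∈ s, g (f x) = ∏ x ∈ s, g x := by
  conv_rhs => rw [← hf]
  rw [prod_image (injOn_of_card_image_eq (by rw [hf]))]

theorem Finset.pow_card_mul_prod_lt_prod_mul_add {ι R : Type*} [CommSemiring R] [PartialOrder R]
    [IsStrictOrderedRing R] {s : Finset ι} (hs : s.Nonempty) {a b : R} (ha : 0 < a) (hb : 0 < b)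
    {x : ι → R} (hx : ∀ i ∈ s, 0 < x i) :
    a ^ #s * ∏ i ∈ s, x i < ∏ i ∈ s, (a * x i + b) := by
  rw [← prod_const, ← prod_mul_distrib]
  exact prod_lt_prod_of_nonempty (fun i hi => mul_pos ha (hx i hi))
    (fun _ _ => lt_add_of_pos_right _ hb) hs

def generalizedCollatz (a b n : ℤ) : ℤ := if n % 2 = 0 then n / 2 else (a * n + b) / 2

namespace generalizedCollatz

variable {a b : ℤ}

theorem two_mul_apply_of_odd (ha : Odd a) (hb : Odd b) {n : ℤ} (hn : Odd n) :
    2 * generalizedCollatz a b n = a * n + b := by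
  rw [generalizedCollatz, if_neg (Int.not_even_iff_odd.mpr hn ∘ Int.even_iff.mpr)]
  exact Int.two_mul_ediv_two_of_even ((ha.mul hn).add_odd hb)

theorem two_mul_apply_of_not_odd {n : ℤ} (hn : ¬Odd n) :
    2 * generalizedCollatz a b n = n := by
  have hn2 : Even n := Int.not_odd_iff_even.mp hn
  rw [generalizedCollatz, if_pos (Int.even_iff.mp hn2)]
  exact Int.two_mul_ediv_two_of_even hn2

theorem two_pow_card_mul_prod_eq (ha : Odd a) (hb : Odd b) {Ω : Finset ℤ}
    (hcycle : Ω.image (generalizedCollatz a b) = Ω) :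
    2 ^ #Ω * ∏ x ∈ Ω, x
      = (∏ x ∈ Ω.filter (fun x => Odd x), (a * x + b))
        * ∏ x ∈ Ω.filter (fun x => ¬ Odd x), x := by
  calc 2 ^ #Ω * ∏ x ∈ Ω, x = 2 ^ #Ω * ∏ x ∈ Ω, generalizedCollatz a b x := by
        rw [prod_comp_eq_prod_of_image_eq hcycle (fun x => x)]
    _ = ∏ x ∈ Ω, 2 * generalizedCollatz a b x := by rw [prod_mul_distrib, prod_const]
    _ = _ := by
        rw [← prod_filter_mul_prod_filter_not Ω (fun x => Odd x)]
        congr 1 <;> refine prod_congr rfl fun x hx => ?_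
        · exact two_mul_apply_of_odd ha hb (mem_filter.mp hx).2
        · exact two_mul_apply_of_not_odd (mem_filter.mp hx).2

end generalizedCollatz

/-- For a cycle `Ω` of `T` with `K` odd and `L` even elements,
`a ^ K < 2 ^ (K + L)`. -/
theorem cycle_power_inequality
    (a b : ℤ) (ha : Odd a) (hb : Odd b) (ha3 : 3 ≤ a) (hb1 : 1 ≤ b)
    (T : ℤ → ℤ) (hT : ∀ n, T n = if n % 2 = 0 then n / 2 else (a * n + b) / 2)
    (Ω : Finset ℤ) (hpos : ∀ x ∈ Ω, 0 < x) (hcycle : Ω.image T = Ω)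
    (K L : ℕ) (hK : K = (Ω.filter (fun x => Odd x)).card)
    (hL : L = (Ω.filter (fun x => ¬ Odd x)).card) (hK1 : 1 ≤ K) :
    a ^ K < 2 ^ (K + L) := by
  obtain rfl : T = generalizedCollatz a b := funext hT
  have hcard : #Ω = K + L := by
    rw [hK, hL]
    exact (card_filter_add_card_filter_not _).symm
  have hodd_nonempty : (Ω.filter (fun x => Odd x)).Nonempty := card_pos.mp (hK ▸ hK1)
  have hmem_pos : ∀ p : ℤ → Prop, [DecidablePred p] → ∀ x ∈ Ω.filter p, 0 < x :=
    fun _ _ x hx => hpos x (mem_filter.mp hx).1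
  refine lt_of_mul_lt_mul_right ?_ (prod_pos hpos).le
  calc a ^ K * ∏ x ∈ Ω, x
        = (a ^ K * ∏ x ∈ Ω.filter (fun x => Odd x), x)
          * ∏ x ∈ Ω.filter (fun x => ¬ Odd x), x := by
          rw [mul_assoc, prod_filter_mul_prod_filter_not]
    _ < (∏ x ∈ Ω.filter (fun x => Odd x), (a * x + b))
          * ∏ x ∈ Ω.filter (fun x => ¬ Odd x), x := by
          refine mul_lt_mul_of_pos_right ?_ (prod_pos (hmem_pos _))
          rw [hK]
          exact pow_card_mul_prod_lt_prod_mul_add hodd_nonempty (by omega) (by omega) (hmem_pos _)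
    _ = 2 ^ (K + L) * ∏ x ∈ Ω, x := by
          rw [← hcard, generalizedCollatz.two_pow_card_mul_prod_eq ha hb hcycle]
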